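/- arXiv:1012.4306 — 6 statements merged into one kernel-verified Lean document; each statement's English description precedes it below -/
import Mathlib

section
/- Let K be a field equipped with an absolute value |·| : K → ℝ, let V be a finite-dimensional K-vector space, and let ε ≥ 0. Let s be an invertible K-linear endomorphism of V whose eigenspaces span V (the supremum of the eigenspaces of s is all of V), and let y be a K-linear endomorphism of V commuting with s. Assume that every eigenvalue μ of y satisfies |μ − 1| ≤ ε, and that every eigenvalue ν ≠ 1 of s satisfies |ν⁻¹ − 1| > ε. Then every vector w ∈ V with (s ∘ y)(w) = w satisfies s(w) = w. -/
/-!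
Since `s * y` commutes with `s`, its fixed space is `s`-stable, hence (as `s` is diagonalizable)
it is spanned by its intersections with the eigenspaces of `s`. On the `μ`-eigenspace of `s`,
a vector `x` fixed by `s * y` satisfies `μ • y x = x`, so a nonzero one is an eigenvector of `y`
for `μ⁻¹`; the separation hypothesis `ε < |μ⁻¹ - 1|` rules this out unless `μ = 1`.
-/

namespace Module.End

variable {K V : Type*} [Field K] [AddCommGroup V] [Module K V]

theorem smul_apply_eq_of_mem_eigenspace_of_mul_apply_eq {s y : End K V} (hsy : Commute s y)
    {μ : K} {x : V} (hx : x ∈ s.eigenspace μ) (hfix : (s * y) x = x) : μ • y x = x := by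
  calc μ • y x = y (s x) := by rw [mem_eigenspace_iff.mp hx, map_smul]
    _ = x := by rw [← mul_apply, ← hsy.eq, hfix]

theorem hasEigenvector_inv_of_mem_eigenspace_of_mul_apply_eq {s y : End K V}
    (hsy : Commute s y) {μ : K} {x : V} (hx : x ∈ s.eigenspace μ) (hfix : (s * y) x = x)
    (hx0 : x ≠ 0) : y.HasEigenvector μ⁻¹ x := by
  have hμx := smul_apply_eq_of_mem_eigenspace_of_mul_apply_eq hsy hx hfix
  have hμ : μ ≠ 0 := by
    rintro rfl
    exact hx0 (by simpa using hμx.symm)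
  exact hasEigenvector_iff.mpr
    ⟨mem_eigenspace_iff.mpr ((eq_inv_smul_iff₀ hμ).mpr hμx), hx0⟩

theorem eigenspace_mul_one_le_eigenspace_one [FiniteDimensional K V] {s y : End K V}
    (hspan : ⨆ μ, s.eigenspace μ = ⊤) (hsy : Commute s y)
    (hsep : ∀ μ, μ ≠ 1 → s.HasEigenvalue μ → ¬ y.HasEigenvalue μ⁻¹) :
    (s * y).eigenspace 1 ≤ s.eigenspace 1 := by
  have hstable : ∀ x ∈ (s * y).eigenspace 1, s x ∈ (s * y).eigenspace 1 :=
    mapsTo_genEigenspace_of_comm ((Commute.refl s).mul_left hsy.symm) 1 1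
  calc (s * y).eigenspace 1 = (s * y).eigenspace 1 ⊓ ⨆ μ, s.eigenspace μ := by
        rw [hspan, inf_top_eq]
    _ = ⨆ μ, (s * y).eigenspace 1 ⊓ s.eigenspace μ :=
        Submodule.inf_iSup_genEigenspace hstable 1
    _ ≤ s.eigenspace 1 := iSup_le fun μ x ⟨hfix, hx⟩ => by
        obtain rfl | hμ := eq_or_ne μ 1
        · exact hx
        have hfix' : (s * y) x = x := by simpa using mem_eigenspace_iff.mp hfix
        by_contra hx1
        have hx0 : x ≠ 0 := fun h => hx1 (h ▸ zero_mem _)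
        exact hsep μ hμ (hasEigenvalue_of_hasEigenvector ⟨hx, hx0⟩)
          (hasEigenvalue_of_hasEigenvector
            (hasEigenvector_inv_of_mem_eigenspace_of_mul_apply_eq hsy hx hfix' hx0))

end Module.End

open Module.End in
theorem stmt_2_general {K V : Type*} [Field K] [AddCommGroup V] [Module K V]
    [FiniteDimensional K V]
    (v : AbsoluteValue K ℝ) (ε : ℝ)
    (s y : Module.End K V)
    (hspan : (⨆ μ : K, s.eigenspace μ) = ⊤)
    (hcomm : Commute s y)
    (hy : ∀ μ : K, y.HasEigenvalue μ → v (μ - 1) ≤ ε)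
    (hsep : ∀ ν : K, s.HasEigenvalue ν → ν ≠ 1 → ε < v (ν⁻¹ - 1)) :
    ∀ w : V, (s * y) w = w → s w = w := by
  intro w hw
  have hfixed : (s * y).eigenspace 1 ≤ s.eigenspace 1 :=
    eigenspace_mul_one_le_eigenspace_one hspan hcomm fun ν hν hsν hyν =>
      (hsep ν hsν hν).not_ge (hy ν⁻¹ hyν)
  simpa using mem_eigenspace_iff.mp (hfixed (mem_eigenspace_iff.mpr (by simpa using hw)))

/-- Let `K` be a field with an absolute value, `V` a finite-dimensional `K`-vector space,
`ε ≥ 0`, `s` an invertible endomorphism of `V` whose eigenspaces span `V`, and `y` an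
endomorphism commuting with `s`, all of whose eigenvalues `μ` satisfy `|μ - 1| ≤ ε`,
while every eigenvalue `ν ≠ 1` of `s` satisfies `|ν⁻¹ - 1| > ε`.  Then every vector
fixed by `s ∘ y` is fixed by `s`. -/
theorem stmt_2 {K V : Type*} [Field K] [AddCommGroup V] [Module K V]
    [FiniteDimensional K V]
    (v : AbsoluteValue K ℝ) (ε : ℝ) (hε : 0 ≤ ε)
    (s y : Module.End K V) (hs : IsUnit s)
    (hspan : (⨆ μ : K, s.eigenspace μ) = ⊤)
    (hcomm : Commute s y)
    (hy : ∀ μ : K, y.HasEigenvalue μ → v (μ - 1) ≤ ε)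
    (hsep : ∀ ν : K, s.HasEigenvalue ν → ν ≠ 1 → ε < v (ν⁻¹ - 1)) :
    ∀ w : V, (s * y) w = w → s w = w :=
  stmt_2_general v ε s y hspan hcomm hy hsep
end

section
/- Let K be a field equipped with a nonarchimedean absolute value |·| (so |x + y| ≤ max(|x|, |y|)), let V be a finite-dimensional K-vector space, and let 0 ≤ ε < 1. Let s be an invertible K-linear endomorphism of V whose eigenspaces span V, and let y, y' be K-linear endomorphisms of V, each commuting with s and each with eigenspaces spanning V. Assume every eigenvalue α of y and every eigenvalue α' of y' satisfies |α − 1| ≤ ε and |α' − 1| ≤ ε, and that any two distinct eigenvalues λ ≠ λ' of s satisfy |λ·(λ')⁻¹ − 1| > ε. If g is an invertible K-linear endomorphism of V such that s ∘ y' ∘ g = g ∘ s ∘ y, then g ∘ s = s ∘ g. -/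
/-!
Diagonalise `s` and `y` simultaneously and take a joint eigenvector `w`, `s w = l w`, `y w = a w`.
Then `g w` is an eigenvector of `s y'` for `l a`. Its component in the `μ`-eigenspace of `s`
is an eigenvector of `y'` for `l a / μ`; since `|a - 1|, |l a / μ - 1| ≤ ε` and the absolute
value is nonarchimedean, `|l / μ - 1| ≤ ε`, which forces `μ = l`. Hence `g` preserves every
eigenspace of `s`, i.e. commutes with `s`.
-/

open Module End

namespace Module.End

variable {K V : Type*} [Field K] [AddCommGroup V] [Module K V] [FiniteDimensional K V]

theorem eq_iSup_inf_eigenspace {f : End K V} {p : Submodule K V} (hp : ∀ x ∈ p, f x ∈ p)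
    (hf : ⨆ μ, f.eigenspace μ = ⊤) : p = ⨆ μ, p ⊓ f.eigenspace μ :=
  Submodule.eq_iSup_inf_genEigenspace 1 hp hf

theorem iSup_iSup_eigenspace_inf_eigenspace_eq_top {f g : End K V} (hfg : Commute f g)
    (hf : ⨆ μ, f.eigenspace μ = ⊤) (hg : ⨆ ν, g.eigenspace ν = ⊤) :
    ⨆ μ, ⨆ ν, f.eigenspace μ ⊓ g.eigenspace ν = ⊤ := by
  conv_rhs => rw [← hf]
  exact iSup_congr fun μ ↦
    (eq_iSup_inf_eigenspace (mapsTo_genEigenspace_of_comm hfg μ 1) hg).symm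

theorem le_eigenspace_of_inf_eigenspace_eq_bot {f : End K V} {p : Submodule K V}
    (hp : ∀ x ∈ p, f x ∈ p) (hf : ⨆ μ, f.eigenspace μ = ⊤) {l : K}
    (h : ∀ μ ≠ l, p ⊓ f.eigenspace μ = ⊥) : p ≤ f.eigenspace l := by
  rw [eq_iSup_inf_eigenspace hp hf]
  refine iSup_le fun μ ↦ ?_
  rcases eq_or_ne μ l with rfl | hμ
  · exact inf_le_right
  · exact (h μ hμ).trans_le bot_le

end Module.End

namespace IsNonarchimedean

variable {K : Type*} [Field K] {v : AbsoluteValue K ℝ}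

theorem apply_eq_one_of_apply_sub_one_lt (hv : IsNonarchimedean v) {a : K} (ha : v (a - 1) < 1) :
    v a = 1 := by
  simpa using hv.add_eq_right_of_lt (x := a - 1) (y := 1) (by simpa using ha)

theorem apply_div_sub_one_le (hv : IsNonarchimedean v) {ε : ℝ} (hε : ε < 1) {a b : K}
    (ha : v (a - 1) ≤ ε) (hb : v (b - 1) ≤ ε) : v (b / a - 1) ≤ ε := by
  have hva : v a = 1 := hv.apply_eq_one_of_apply_sub_one_lt (ha.trans_lt hε)
  have ha0 : a ≠ 0 := by rintro rfl; simp at hva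
  calc v (b / a - 1) = v ((b - 1) + -(a - 1)) / v a := by
        rw [← map_div₀]; congr 1; field_simp; ring
    _ ≤ max (v (b - 1)) (v (-(a - 1))) := by rw [hva, div_one]; exact hv _ _
    _ ≤ ε := by rw [map_neg_eq_map]; exact max_le hb ha

end IsNonarchimedean

section

variable {K V : Type*} [Field K] [AddCommGroup V] [Module K V] {v : AbsoluteValue K ℝ} {ε : ℝ}
  {s y y' : End K V}

theorem eigenspace_mul_inf_eigenspace_eq_bot (hna : IsNonarchimedean v) (hε1 : ε < 1)
    (hs : IsUnit s) (hcy' : Commute s y')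
    (hy' : ∀ α : K, y'.HasEigenvalue α → v (α - 1) ≤ ε)
    (hsep : ∀ l₁ l₂ : K, s.HasEigenvalue l₁ → s.HasEigenvalue l₂ → l₁ ≠ l₂ →
      ε < v (l₁ * l₂⁻¹ - 1))
    {l a μ : K} (hl : s.HasEigenvalue l) (ha : v (a - 1) ≤ ε) (hμl : μ ≠ l) :
    (s * y').eigenspace (l * a) ⊓ s.eigenspace μ = ⊥ := by
  refine eq_bot_iff.mpr fun u ⟨hu, huμ⟩ ↦ (Submodule.mem_bot K).mpr ?_
  by_contra hu0
  rw [SetLike.mem_coe, mem_eigenspace_iff] at hu huμ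
  have hμ : s.HasEigenvalue μ :=
    hasEigenvalue_of_hasEigenvector ⟨mem_eigenspace_iff.mpr huμ, hu0⟩
  have hμ0 : μ ≠ 0 := by
    rintro rfl
    exact hu0 (((End.isUnit_iff s).mp hs).injective (by simpa using huμ))
  have ha0 : a ≠ 0 := by
    rintro rfl
    norm_num at ha
    linarith
  -- `s y'` acts on the `μ`-eigenspace of `s` as `μ y'`
  have hy'u : y' u = (l * a / μ) • u := by
    have : μ • y' u = (l * a) • u :=
      calc μ • y' u = (y' * s) u := by rw [mul_apply, huμ, map_smul]
        _ = (l * a) • u := by rw [← hcy'.eq, hu]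
    rw [div_eq_inv_mul, ← smul_smul, ← this, smul_smul, inv_mul_cancel₀ hμ0, one_smul]
  have hb := hy' _ (hasEigenvalue_of_hasEigenvector ⟨mem_eigenspace_iff.mpr hy'u, hu0⟩)
  have hclose := hna.apply_div_sub_one_le hε1 ha hb
  rw [show l * a / μ / a = l * μ⁻¹ by field_simp] at hclose
  exact (hsep l μ hl hμ hμl.symm).not_ge hclose

theorem apply_mem_eigenspace_of_conj [FiniteDimensional K V] {g : End K V}
    (hna : IsNonarchimedean v) (hε1 : ε < 1) (hs : IsUnit s)
    (hspan_s : (⨆ μ : K, s.eigenspace μ) = ⊤) (hcy' : Commute s y')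
    (hy : ∀ α : K, y.HasEigenvalue α → v (α - 1) ≤ ε)
    (hy' : ∀ α : K, y'.HasEigenvalue α → v (α - 1) ≤ ε)
    (hsep : ∀ l₁ l₂ : K, s.HasEigenvalue l₁ → s.HasEigenvalue l₂ → l₁ ≠ l₂ →
      ε < v (l₁ * l₂⁻¹ - 1))
    (hconj : s * y' * g = g * (s * y)) {l a : K} {w : V}
    (hw : w ∈ s.eigenspace l ⊓ y.eigenspace a) : g w ∈ s.eigenspace l := by
  rcases eq_or_ne w 0 with rfl | hw0
  · simp
  have hl : s.HasEigenvalue l := hasEigenvalue_of_hasEigenvector ⟨hw.1, hw0⟩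
  have ha : v (a - 1) ≤ ε := hy a (hasEigenvalue_of_hasEigenvector ⟨hw.2, hw0⟩)
  have hgw : g w ∈ (s * y').eigenspace (l * a) := by
    rw [mem_eigenspace_iff, ← mul_apply, hconj, mul_apply, mul_apply,
      mem_eigenspace_iff.mp hw.2, map_smul, mem_eigenspace_iff.mp hw.1, smul_smul, map_smul,
      mul_comm]
  exact le_eigenspace_of_inf_eigenspace_eq_bot
    (mapsTo_genEigenspace_of_comm ((Commute.refl s).mul_left hcy'.symm) _ 1) hspan_s
    (fun μ hμl ↦ eigenspace_mul_inf_eigenspace_eq_bot hna hε1 hs hcy' hy' hsep hl ha hμl) hgw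

end

theorem stmt_3_general {K V : Type*} [Field K] [AddCommGroup V] [Module K V]
    [FiniteDimensional K V]
    (v : AbsoluteValue K ℝ)
    (hna : ∀ x y : K, v (x + y) ≤ max (v x) (v y))
    (ε : ℝ) (hε1 : ε < 1)
    (s y y' g : Module.End K V) (hs : IsUnit s)
    (hspan_s : (⨆ μ : K, s.eigenspace μ) = ⊤)
    (hspan_y : (⨆ μ : K, y.eigenspace μ) = ⊤)
    (hcy : Commute s y) (hcy' : Commute s y')
    (hy : ∀ α : K, y.HasEigenvalue α → v (α - 1) ≤ ε)
    (hy' : ∀ α : K, y'.HasEigenvalue α → v (α - 1) ≤ ε)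
    (hsep : ∀ l₁ l₂ : K, s.HasEigenvalue l₁ → s.HasEigenvalue l₂ → l₁ ≠ l₂ →
      ε < v (l₁ * l₂⁻¹ - 1))
    (hconj : s * y' * g = g * (s * y)) :
    g * s = s * g := by
  refine LinearMap.eqLocus_eq_top.mp (eq_top_iff.mpr ?_)
  rw [← iSup_iSup_eigenspace_inf_eigenspace_eq_top hcy hspan_s hspan_y]
  refine iSup_le fun l ↦ iSup_le fun a w hw ↦ ?_
  have hgw := apply_mem_eigenspace_of_conj hna hε1 hs hspan_s hcy' hy hy' hsep hconj hw
  change g (s w) = s (g w)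
  rw [mem_eigenspace_iff.mp hw.1, map_smul, mem_eigenspace_iff.mp hgw]

/-- Let `K` be a field with a nonarchimedean absolute value, `V` a finite-dimensional
`K`-vector space and `0 ≤ ε < 1`.  Let `s` be an invertible endomorphism with eigenspaces
spanning `V`, let `y, y'` commute with `s`, have eigenspaces spanning `V`, and all their
eigenvalues `α` satisfy `|α - 1| ≤ ε`, while distinct eigenvalues `λ ≠ λ'` of `s` satisfy
`|λ·λ'⁻¹ - 1| > ε`.  If `g` is invertible and `s ∘ y' ∘ g = g ∘ s ∘ y` then `g` commutes
with `s`. -/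
theorem stmt_3 {K V : Type*} [Field K] [AddCommGroup V] [Module K V]
    [FiniteDimensional K V]
    (v : AbsoluteValue K ℝ)
    (hna : ∀ x y : K, v (x + y) ≤ max (v x) (v y))
    (ε : ℝ) (hε0 : 0 ≤ ε) (hε1 : ε < 1)
    (s y y' g : Module.End K V) (hs : IsUnit s) (hg : IsUnit g)
    (hspan_s : (⨆ μ : K, s.eigenspace μ) = ⊤)
    (hspan_y : (⨆ μ : K, y.eigenspace μ) = ⊤)
    (hspan_y' : (⨆ μ : K, y'.eigenspace μ) = ⊤)
    (hcy : Commute s y) (hcy' : Commute s y')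
    (hy : ∀ α : K, y.HasEigenvalue α → v (α - 1) ≤ ε)
    (hy' : ∀ α : K, y'.HasEigenvalue α → v (α - 1) ≤ ε)
    (hsep : ∀ l₁ l₂ : K, s.HasEigenvalue l₁ → s.HasEigenvalue l₂ → l₁ ≠ l₂ →
      ε < v (l₁ * l₂⁻¹ - 1))
    (hconj : s * y' * g = g * (s * y)) :
    g * s = s * g :=
  stmt_3_general v hna ε hε1 s y y' g hs hspan_s hspan_y hcy hcy' hy hy' hsep hconj
end

section
/- Let k be a field, g a finite-dimensional Lie algebra over k, j a Lie subalgebra of g, h = {X ∈ g : ⁅X, Y⁆ = 0 for all Y ∈ j} the centralizer of j, and B the linear span of all brackets ⁅X, Y⁆ with X ∈ j and Y ∈ g. Assume that g is the direct sum of the subspaces h and B. Let l be a linear form on g vanishing on B, and assume that the alternating bilinear form β_l(X, Y) = l(⁅X, Y⁆) restricted to B is nondegenerate, i.e., if X ∈ B satisfies l(⁅X, Y⁆) = 0 for all Y ∈ B, then X = 0. Then g(l) = {X ∈ g : l(⁅X, Y⁆) = 0 for all Y ∈ g} is contained in h, and for every X ∈ h one has X ∈ g(l) if and only if l(⁅X,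 Y⁆) = 0 for all Y ∈ h. -/
/-- The centralizer `h = {X ∈ g : ⁅X, Y⁆ = 0 for all Y ∈ j}` of a Lie subalgebra `j`,
as a submodule of `g`. -/
def centralizerSubmodule {k g : Type*} [Field k] [LieRing g] [LieAlgebra k g]
    (j : LieSubalgebra k g) : Submodule k g where
  carrier := {X : g | ∀ Y ∈ j, ⁅X, Y⁆ = 0}
  add_mem' := by
    intro a b ha hb Y hY
    rw [add_lie, ha Y hY, hb Y hY, add_zero]
  zero_mem' := by
    intro Y hY
    rw [zero_lie]
  smul_mem' := by
    intro c a ha Y hY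
    rw [smul_lie, ha Y hY, smul_zero]

/-- The linear span `B = [j, g]` of all brackets `⁅X, Y⁆` with `X ∈ j`, `Y ∈ g`. -/
def bracketSpan {k g : Type*} [Field k] [LieRing g] [LieAlgebra k g]
    (j : LieSubalgebra k g) : Submodule k g :=
  Submodule.span k {z : g | ∃ X ∈ j, ∃ Y : g, z = ⁅X, Y⁆}


lemma bracket_centralizer_mem {k g : Type*} [Field k] [LieRing g] [LieAlgebra k g]
    (j : LieSubalgebra k g) {H : g}
    (hH : ∀ Y ∈ j, ⁅H, Y⁆ = 0) {Y : g}
    (hY : Y ∈ Submodule.span k {z : g | ∃ X ∈ j, ∃ Y : g, z = ⁅X, Y⁆}) :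
    ⁅H, Y⁆ ∈ Submodule.span k {z : g | ∃ X ∈ j, ∃ Y : g, z = ⁅X, Y⁆} := by
  induction hY using Submodule.span_induction with
  | mem z hz =>
    obtain ⟨Z, hZ, W, rfl⟩ := hz
    have : ⁅H, ⁅Z, W⁆⁆ = ⁅Z, ⁅H, W⁆⁆ := by
      rw [leibniz_lie, hH Z hZ, zero_lie, zero_add]
    rw [this]
    exact Submodule.subset_span ⟨Z, hZ, ⁅H, W⁆, rfl⟩
  | zero => rw [lie_zero]; exact Submodule.zero_mem _
  | add a b _ _ ha hb => rw [lie_add]; exact Submodule.add_mem _ ha hb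
  | smul c a _ ha => rw [lie_smul]; exact Submodule.smul_mem _ c ha

/-- Suppose `g = h ⊕ B` where `h` is the centralizer of `j` and `B = [j, g]`, and let
`l` be a linear form vanishing on `B` such that `β_l` restricted to `B` is nondegenerate.
Then `g(l) ⊆ h`, and for `X ∈ h` one has `X ∈ g(l)` iff `l⁅X, Y⁆ = 0` for all `Y ∈ h`. -/
theorem stmt_9 {k g : Type*} [Field k] [LieRing g] [LieAlgebra k g]
    [FiniteDimensional k g] (j : LieSubalgebra k g)
    (hcompl : IsCompl (centralizerSubmodule j) (bracketSpan j))
    (l : Module.Dual k g)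
    (hlB : ∀ X ∈ bracketSpan j, l X = 0)
    (hnd : ∀ X ∈ bracketSpan j, (∀ Y ∈ bracketSpan j, l ⁅X, Y⁆ = 0) → X = 0) :
    (∀ X : g, (∀ Y : g, l ⁅X, Y⁆ = 0) → X ∈ centralizerSubmodule j) ∧
    (∀ X ∈ centralizerSubmodule j,
      ((∀ Y : g, l ⁅X, Y⁆ = 0) ↔ (∀ Y ∈ centralizerSubmodule j, l ⁅X, Y⁆ = 0))) := by
  
  have key : ∀ H ∈ centralizerSubmodule j, ∀ Y ∈ bracketSpan j, ⁅H, Y⁆ ∈ bracketSpan j :=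
    fun H hH Y hY => bracket_centralizer_mem j hH hY
  have decomp : ∀ X : g, ∃ H ∈ centralizerSubmodule j, ∃ B ∈ bracketSpan j, H + B = X := by
    intro X
    have : X ∈ centralizerSubmodule j ⊔ bracketSpan j := by
      rw [hcompl.sup_eq_top]; trivial
    exact Submodule.mem_sup.mp this
  constructor
  · intro X hX
    obtain ⟨H, hH, B, hB, hsum⟩ := decomp X
    have hB0 : B = 0 := by
      apply hnd B hB
      intro Y hY
      have h1 : l ⁅X, Y⁆ = 0 := hX Y
      have h2 : l ⁅H, Y⁆ = 0 := hlB _ (key H hH Y hY)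
      have : ⁅X, Y⁆ = ⁅H, Y⁆ + ⁅B, Y⁆ := by rw [← hsum, add_lie]
      have := congrArg l this
      rw [h1, map_add, h2, zero_add] at this
      exact this.symm
    rw [← hsum, hB0, add_zero]
    exact hH
  · intro X hX
    constructor
    · exact fun h Y _ => h Y
    · intro h Y
      obtain ⟨H, hH, B, hB, hsum⟩ := decomp Y
      have : ⁅X, Y⁆ = ⁅X, H⁆ + ⁅X, B⁆ := by rw [← hsum, lie_add]
      rw [this, map_add, h H hH, hlB _ (key X hX B hB), add_zero]
end

section
/- Let k be a field, g a finite-dimensional Lie algebra over k, j a Lie subalgebra of g, h = {X ∈ g : ⁅X, Y⁆ = 0 for all Y ∈ j} the centralizer of j, and B the linear span of all brackets ⁅X, Y⁆ with X ∈ j and Y ∈ g. Assume that g is the direct sum of the subspaces h and B. Let l be a linear form on g vanishing on B, and assume that g(l) = {X ∈ g : l(⁅X, Y⁆) = 0 for all Y ∈ g} is contained in h. Then the alternating bilinear form β_l(X, Y) = l(⁅X, Y⁆) restricted to B is nondegenerate: if X ∈ B satisfies l(⁅X, Y⁆) = 0 for all Y ∈ B, then X = 0. -/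
/-
Proof idea: for `h` in the centralizer of `j`, the Jacobi identity gives
`⁅⁅Z, W⁆, h⁆ = ⁅Z, ⁅W, h⁆⁆` for `Z ∈ j`, so `ad h` preserves `B`. Since `l` vanishes on `B`,
`l⁅X, h⁆ = 0` for every `X ∈ B`; as `g = h + B`, an `X ∈ B` that is `β_l`-orthogonal to `B`
is then `β_l`-orthogonal to all of `g`, hence lies in `g(l) ⊆ h`, and `h ∩ B = 0`.
-/

section

variable {k g : Type*} [Field k] [LieRing g] [LieAlgebra k g] {j : LieSubalgebra k g}

theorem lie_mem_bracketSpan_of_mem_centralizerSubmodule {X h : g} (hX : X ∈ bracketSpan j)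
    (hh : h ∈ centralizerSubmodule j) : ⁅X, h⁆ ∈ bracketSpan j := by
  suffices bracketSpan j ≤ (bracketSpan j).comap (LieAlgebra.ad k g h) by
    rw [← lie_skew]
    exact neg_mem (this hX)
  refine Submodule.span_le.2 ?_
  rintro _ ⟨Z, hZ, W, rfl⟩
  have hhZ : ⁅h, Z⁆ = 0 := hh Z hZ
  change ⁅h, ⁅Z, W⁆⁆ ∈ bracketSpan j
  rw [leibniz_lie, hhZ, zero_lie, zero_add]
  exact Submodule.subset_span ⟨Z, hZ, ⁅h, W⁆, rfl⟩

theorem dual_lie_eq_zero_of_forall_mem_bracketSpan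
    (hsup : Codisjoint (centralizerSubmodule j) (bracketSpan j)) {l : Module.Dual k g}
    (hlB : ∀ X ∈ bracketSpan j, l X = 0) {X : g} (hX : X ∈ bracketSpan j)
    (hXB : ∀ Y ∈ bracketSpan j, l ⁅X, Y⁆ = 0) (Y : g) : l ⁅X, Y⁆ = 0 := by
  obtain ⟨h, hh, b, hb, rfl⟩ := Submodule.mem_sup.1 (hsup.eq_top ▸ Submodule.mem_top : Y ∈ _)
  rw [lie_add, map_add, hlB _ (lie_mem_bracketSpan_of_mem_centralizerSubmodule hX hh),
    hXB b hb, add_zero]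

end

theorem stmt_10_general {k g : Type*} [Field k] [LieRing g] [LieAlgebra k g]
    (j : LieSubalgebra k g)
    (hcompl : IsCompl (centralizerSubmodule j) (bracketSpan j))
    (l : Module.Dual k g)
    (hlB : ∀ X ∈ bracketSpan j, l X = 0)
    (hgl : ∀ X : g, (∀ Y : g, l ⁅X, Y⁆ = 0) → X ∈ centralizerSubmodule j) :
    ∀ X ∈ bracketSpan j, (∀ Y ∈ bracketSpan j, l ⁅X, Y⁆ = 0) → X = 0 := fun X hX hXB =>
  Submodule.disjoint_def.1 hcompl.disjoint X
    (hgl X (dual_lie_eq_zero_of_forall_mem_bracketSpan hcompl.codisjoint hlB hX hXB)) hX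

/-- Suppose `g = h ⊕ B` where `h` is the centralizer of `j` and `B = [j, g]`, and let
`l` be a linear form vanishing on `B` with `g(l) ⊆ h`.  Then the form
`β_l(X, Y) = l⁅X, Y⁆` restricted to `B` is nondegenerate. -/
theorem stmt_10 {k g : Type*} [Field k] [LieRing g] [LieAlgebra k g]
    [FiniteDimensional k g] (j : LieSubalgebra k g)
    (hcompl : IsCompl (centralizerSubmodule j) (bracketSpan j))
    (l : Module.Dual k g)
    (hlB : ∀ X ∈ bracketSpan j, l X = 0)
    (hgl : ∀ X : g, (∀ Y : g, l ⁅X, Y⁆ = 0) → X ∈ centralizerSubmodule j) :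
    ∀ X ∈ bracketSpan j, (∀ Y ∈ bracketSpan j, l ⁅X, Y⁆ = 0) → X = 0 :=
  stmt_10_general j hcompl l hlB hgl
end

section
/- Let G be a group and Z a subgroup of the center of G of finite index, and let χ : Z → ℂˣ be a group homomorphism. Let W be the ℂ-vector space of all functions f : G → ℂ satisfying f(x·z) = χ(z)⁻¹ · f(x) for all x ∈ G and z ∈ Z, and for s ∈ G let T_s : W → W be the linear operator (T_s f)(x) = f(s⁻¹·x). If s ∉ Z, then the trace of T_s equals 0. -/
/-- The space `W` of functions `f : G → ℂ` with `f (x z) = χ(z)⁻¹ f x` for `z ∈ Z`,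
realizing the representation of `G` induced from the character `χ` of `Z`. -/
noncomputable def inducedSpace {G : Type*} [Group G] (Z : Subgroup G) (χ : Z →* ℂˣ) :
    Submodule ℂ (G → ℂ) where
  carrier := {f | ∀ (x : G) (z : Z), f (x * (z : G)) = ((χ z : ℂˣ) : ℂ)⁻¹ * f x}
  add_mem' := by
    intro a b ha hb x z
    simp only [Pi.add_apply, ha x z, hb x z]
    ring
  zero_mem' := by
    intro x z
    simp
  smul_mem' := by
    intro c a ha x z
    simp only [Pi.smul_apply, smul_eq_mul, ha x z]
    ring

/-- The left-translation operator `(T_s f)(x) = f (s⁻¹ x)` on the induced space. -/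
noncomputable def translationOp {G : Type*} [Group G] (Z : Subgroup G) (χ : Z →* ℂˣ) (s : G) :
    inducedSpace Z χ →ₗ[ℂ] inducedSpace Z χ where
  toFun f := ⟨fun x => (f : G → ℂ) (s⁻¹ * x), by
    intro x z
    have h := f.2 (s⁻¹ * x) z
    simpa [mul_assoc] using h⟩
  map_add' := by
    intro a b
    apply Subtype.ext
    funext x
    rfl
  map_smul' := by
    intro c a
    apply Subtype.ext
    funext x
    rfl

/-! Evaluation at coset representatives identifies `W` with the functions on `G ⧸ Z`. In the
resulting basis, `T_s` sends the basis vector of the coset `q` to a multiple of the one of `s q`,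
and `s q ≠ q` for every `q` since `Z` is normal and `s ∉ Z`: every diagonal entry vanishes. -/

theorem LinearMap.trace_eq_zero_of_forall_repr_apply_self_eq_zero {R M ι : Type*} [CommRing R]
    [AddCommGroup M] [Module R M] [Finite ι] (b : Module.Basis ι R M) (f : M →ₗ[R] M)
    (h : ∀ i, b.repr (f (b i)) i = 0) : LinearMap.trace R M f = 0 := by
  classical
  have := Fintype.ofFinite ι
  rw [LinearMap.trace_eq_matrix_trace R b]
  exact Finset.sum_eq_zero fun i _ => by simpa [LinearMap.toMatrix_apply] using h i

theorem Subgroup.normal_of_le_center {G : Type*} [Group G] {Z : Subgroup G}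
    (hZ : Z ≤ Subgroup.center G) : Z.Normal :=
  ⟨fun n hn g => by rwa [Subgroup.mem_center_iff.mp (hZ hn) g, mul_inv_cancel_right]⟩

namespace QuotientGroup

variable {G : Type*} [Group G]

theorem mk_mul_ne_mk {N : Subgroup G} [N.Normal] {s : G} (hs : s ∉ N) (g : G) :
    (mk (s * g) : G ⧸ N) ≠ mk g := by
  rwa [mk_mul, Ne, mul_eq_right, eq_one_iff]

variable (Z : Subgroup G)

noncomputable def outInvMul (x : G) : Z :=
  ⟨(mk x : G ⧸ Z).out⁻¹ * x, QuotientGroup.eq.mp (out_eq' _)⟩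

theorem outInvMul_mul (x : G) (z : Z) : outInvMul Z (x * z) = outInvMul Z x * z := by
  have : (mk (x * z) : G ⧸ Z) = mk x := mk_mul_of_mem x z.2
  ext
  simp [outInvMul, this, mul_assoc]

theorem mul_outInvMul (x : G) : (mk x : G ⧸ Z).out * outInvMul Z x = x :=
  mul_inv_cancel_left _ _

theorem outInvMul_out (q : G ⧸ Z) : outInvMul Z q.out = 1 := by
  ext
  simp [outInvMul]

end QuotientGroup

namespace inducedSpace

open QuotientGroup

variable {G : Type*} [Group G] (Z : Subgroup G) (χ : Z →* ℂˣ)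

noncomputable def equivCosetFun : inducedSpace Z χ ≃ₗ[ℂ] (G ⧸ Z → ℂ) where
  toFun f q := (f : G → ℂ) q.out
  invFun c := ⟨fun x => ((χ (outInvMul Z x) : ℂˣ) : ℂ)⁻¹ * c (mk x), fun x z => by
    simp [outInvMul_mul, mk_mul_of_mem x z.2, mul_comm, mul_left_comm]⟩
  map_add' _ _ := rfl
  map_smul' _ _ := rfl
  left_inv f := by
    ext x
    change ((χ (outInvMul Z x) : ℂˣ) : ℂ)⁻¹ * (f : G → ℂ) (mk x : G ⧸ Z).out = (f : G → ℂ) x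
    rw [← f.2, mul_outInvMul]
  right_inv c := by
    ext q
    simp [outInvMul_out]

noncomputable def basis [Z.FiniteIndex] : Module.Basis (G ⧸ Z) ℂ (inducedSpace Z χ) :=
  .ofEquivFun (equivCosetFun Z χ)

theorem basis_repr_apply [Z.FiniteIndex] (f : inducedSpace Z χ) (q : G ⧸ Z) :
    (basis Z χ).repr f q = (f : G → ℂ) q.out :=
  rfl

theorem basis_apply_eq_zero [Z.FiniteIndex] {q : G ⧸ Z} {x : G} (hx : (mk x : G ⧸ Z) ≠ q) :
    (basis Z χ q : G → ℂ) x = 0 := by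
  classical
  simp [basis, Module.Basis.coe_ofEquivFun, equivCosetFun, Pi.single_apply, hx]

end inducedSpace

theorem translationOp_apply {G : Type*} [Group G] (Z : Subgroup G) (χ : Z →* ℂˣ) (s : G)
    (f : inducedSpace Z χ) (x : G) : (translationOp Z χ s f : G → ℂ) x = (f : G → ℂ) (s⁻¹ * x) :=
  rfl

/-- If `Z` is a central subgroup of finite index of `G`, `χ : Z → ℂˣ` a character and
`s ∉ Z`, then the trace of the translation operator `T_s` on the induced space is `0`. -/
theorem stmt_12 {G : Type*} [Group G] (Z : Subgroup G) (hZ : Z ≤ Subgroup.center G)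
    [Subgroup.FiniteIndex Z] (χ : Z →* ℂˣ) (s : G) (hs : s ∉ Z) :
    LinearMap.trace ℂ (inducedSpace Z χ) (translationOp Z χ s) = 0 := by
  have := Subgroup.normal_of_le_center hZ
  refine LinearMap.trace_eq_zero_of_forall_repr_apply_self_eq_zero (inducedSpace.basis Z χ) _
    fun q => ?_
  rw [inducedSpace.basis_repr_apply, translationOp_apply]
  refine inducedSpace.basis_apply_eq_zero Z χ ?_
  simpa using QuotientGroup.mk_mul_ne_mk (inv_mem_iff.not.mpr hs) q.out
end

section
/- Let p be a prime, γ ∈ ℚ_p with γ ≠ 0, let K₁ be an open subgroup of the multiplicative group ℚ_pˣ, and let K₂ be a compact open subgroup of the additive group ℚ_p × ℚ_p. Then the ℂ-vector space of all functions φ : ℚ_pˣ → ℂ satisfying (i) φ(b·k) = φ(b) for all b ∈ ℚ_pˣ and k ∈ K₁, and (ii) whenever φ(b) ≠ 0, one has b⁻¹·x + γ·b·y ∈ ℤ_p for all (x, y) ∈ K₂, is finite-dimensional. -/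
/-!
Testing the integrality condition at `(t, 0)` and `(0, t)` for a small `t ≠ 0` with both
vectors in `K₂` confines the support of `φ` to the annulus `‖t‖ ≤ ‖b‖ ≤ (‖γ‖ ‖t‖)⁻¹`, which is
compact in `ℚ_pˣ`. A compact set meets only finitely many cosets `b K₁` of the open subgroup
`K₁`, and a right `K₁`-invariant function vanishing off that set is determined by its values at
representatives of these cosets.
-/

/-- The space of functions `φ : ℚ_pˣ → ℂ` which are right-invariant under `K₁` and such
that whenever `φ b ≠ 0` one has `b⁻¹ x + γ b y ∈ ℤ_p` for all `(x, y) ∈ K₂`. -/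
noncomputable def stmt15Space (p : ℕ) [Fact p.Prime] (γ : ℚ_[p])
    (K₁ : Subgroup ℚ_[p]ˣ) (K₂ : AddSubgroup (ℚ_[p] × ℚ_[p])) :
    Submodule ℂ (ℚ_[p]ˣ → ℂ) where
  carrier := {φ | (∀ (b : ℚ_[p]ˣ) (k : K₁), φ (b * (k : ℚ_[p]ˣ)) = φ b) ∧
    ∀ b : ℚ_[p]ˣ, φ b ≠ 0 →
      ∀ xy ∈ K₂, ‖((b : ℚ_[p]))⁻¹ * xy.1 + γ * (b : ℚ_[p]) * xy.2‖ ≤ 1}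
  add_mem' := by
    rintro a b ⟨ha1, ha2⟩ ⟨hb1, hb2⟩
    refine ⟨fun x k => by simp only [Pi.add_apply, ha1 x k, hb1 x k], ?_⟩
    intro x hx xy hxy
    have h : a x ≠ 0 ∨ b x ≠ 0 := by
      by_contra h
      push_neg at h
      apply hx
      simp only [Pi.add_apply, h.1, h.2, add_zero]
    cases h with
    | inl h => exact ha2 x h xy hxy
    | inr h => exact hb2 x h xy hxy
  zero_mem' := ⟨fun x k => rfl, fun x hx => absurd rfl hx⟩
  smul_mem' := by
    rintro c a ⟨ha1, ha2⟩
    refine ⟨fun x k => by simp only [Pi.smul_apply, ha1 x k], ?_⟩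
    intro x hx xy hxy
    have h : a x ≠ 0 := by
      intro h
      apply hx
      simp only [Pi.smul_apply, h, smul_zero]
    exact ha2 x h xy hxy

open Topology

theorem Submodule.finiteDimensional_of_right_invariant_of_support_subset
    {G 𝕜 : Type*} [Group G] [TopologicalSpace G] [SeparatelyContinuousMul G] [DivisionRing 𝕜]
    {K : Subgroup G} (hK : IsOpen (K : Set G)) {T : Set G} (hT : IsCompact T)
    (W : Submodule 𝕜 (G → 𝕜)) (h_inv : ∀ φ ∈ W, ∀ g, ∀ k ∈ K, φ (g * k) = φ g)
    (h_supp : ∀ φ ∈ W, Function.support φ ⊆ T) : FiniteDimensional 𝕜 W := by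
  obtain ⟨s, hs⟩ := hT.elim_finite_subcover (fun g : G => (g * ·) '' (K : Set G))
    (fun g => (Homeomorph.mulLeft g).isOpenMap _ hK)
    (fun g _ => Set.mem_iUnion.mpr ⟨g, 1, K.one_mem, mul_one g⟩)
  refine FiniteDimensional.of_injective
    ((LinearMap.funLeft 𝕜 𝕜 ((↑) : s → G)).comp W.subtype) ?_
  rw [injective_iff_map_eq_zero]
  intro φ hφ
  ext g
  by_contra hg
  obtain ⟨i, hi, k, hk, rfl⟩ := Set.mem_iUnion₂.mp (hs (h_supp φ φ.2 hg))
  exact hg ((h_inv φ φ.2 i k hk).trans (congrFun hφ ⟨i, hi⟩))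

theorem isCompact_units_norm_mem_Icc {𝕜 : Type*} [NormedField 𝕜] [ProperSpace 𝕜]
    {r : ℝ} (hr : 0 < r) (R : ℝ) : IsCompact {u : 𝕜ˣ | ‖(u : 𝕜)‖ ∈ Set.Icc r R} := by
  have h_image : Units.val '' {u : 𝕜ˣ | ‖(u : 𝕜)‖ ∈ Set.Icc r R} = (‖·‖) ⁻¹' Set.Icc r R := by
    refine Set.Subset.antisymm (Set.image_subset_iff.2 fun _ hu => hu) fun x hx => ?_
    have hx0 : x ≠ 0 := norm_pos_iff.1 (hr.trans_le hx.1)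
    exact ⟨Units.mk0 x hx0, hx, rfl⟩
  rw [Units.isEmbedding_val₀.isCompact_iff, h_image]
  exact Metric.isCompact_of_isClosed_isBounded (isClosed_Icc.preimage continuous_norm)
    (isBounded_iff_forall_norm_le.2 ⟨R, fun _ hx => hx.2⟩)

theorem exists_ne_zero_mk_zero_mem_and_zero_mk_mem {M : Type*} [TopologicalSpace M] [Zero M]
    [(𝓝[≠] (0 : M)).NeBot] {U : Set (M × M)} (hU : U ∈ 𝓝 0) :
    ∃ t ≠ 0, (t, 0) ∈ U ∧ (0, t) ∈ U := by
  have h₁ : ∀ᶠ t in 𝓝 (0 : M), (t, (0 : M)) ∈ U :=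
    (continuous_id.prodMk continuous_const).continuousAt.preimage_mem_nhds hU
  have h₂ : ∀ᶠ t in 𝓝 (0 : M), ((0 : M), t) ∈ U :=
    (continuous_const.prodMk continuous_id).continuousAt.preimage_mem_nhds hU
  have h₀ : ∀ᶠ t in 𝓝[≠] (0 : M), t ≠ 0 := eventually_mem_nhdsWithin
  exact (h₀.and (nhdsWithin_le_nhds (h₁.and h₂))).exists

theorem norm_mem_Icc_of_mem_stmt15Space {p : ℕ} [Fact p.Prime] {γ : ℚ_[p]} (hγ : γ ≠ 0)
    {K₁ : Subgroup ℚ_[p]ˣ} {K₂ : AddSubgroup (ℚ_[p] × ℚ_[p])} {t : ℚ_[p]} (ht : t ≠ 0)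
    (ht₁ : (t, 0) ∈ K₂) (ht₂ : (0, t) ∈ K₂) {φ : ℚ_[p]ˣ → ℂ}
    (hφ : φ ∈ stmt15Space p γ K₁ K₂) {b : ℚ_[p]ˣ} (hb : φ b ≠ 0) :
    ‖(b : ℚ_[p])‖ ∈ Set.Icc ‖t‖ (‖γ‖ * ‖t‖)⁻¹ := by
  have h₁ := hφ.2 b hb _ ht₁
  have h₂ := hφ.2 b hb _ ht₂
  simp only [mul_zero, add_zero, zero_add, norm_mul, norm_inv] at h₁ h₂
  have hγt : 0 < ‖γ‖ * ‖t‖ := mul_pos (norm_pos_iff.2 hγ) (norm_pos_iff.2 ht)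
  constructor
  · simpa using (inv_mul_le_iff₀ (norm_pos_iff.2 b.ne_zero)).1 h₁
  · rw [← one_div, le_div_iff₀ hγt]
    linarith

theorem stmt_15_general (p : ℕ) [Fact p.Prime] (γ : ℚ_[p]) (hγ : γ ≠ 0)
    (K₁ : Subgroup ℚ_[p]ˣ) (hK₁ : IsOpen (K₁ : Set ℚ_[p]ˣ))
    (K₂ : AddSubgroup (ℚ_[p] × ℚ_[p])) (hK₂o : IsOpen (K₂ : Set (ℚ_[p] × ℚ_[p]))) :
    FiniteDimensional ℂ (stmt15Space p γ K₁ K₂) := by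
  obtain ⟨t, ht, ht₁, ht₂⟩ :=
    exists_ne_zero_mk_zero_mem_and_zero_mk_mem (hK₂o.mem_nhds K₂.zero_mem)
  exact Submodule.finiteDimensional_of_right_invariant_of_support_subset hK₁
    (isCompact_units_norm_mem_Icc (norm_pos_iff.2 ht) (‖γ‖ * ‖t‖)⁻¹) _
    (fun φ hφ b k hk => hφ.1 b ⟨k, hk⟩)
    (fun φ hφ _ hb => norm_mem_Icc_of_mem_stmt15Space hγ ht ht₁ ht₂ hφ hb)

/-- Let `γ ≠ 0`, `K₁` an open subgroup of `ℚ_pˣ` and `K₂` a compact open subgroup of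
`ℚ_p × ℚ_p`.  Then the space of functions `φ : ℚ_pˣ → ℂ` which are right `K₁`-invariant
and whose support satisfies the integrality condition is finite-dimensional. -/
theorem stmt_15 (p : ℕ) [Fact p.Prime] (γ : ℚ_[p]) (hγ : γ ≠ 0)
    (K₁ : Subgroup ℚ_[p]ˣ) (hK₁ : IsOpen (K₁ : Set ℚ_[p]ˣ))
    (K₂ : AddSubgroup (ℚ_[p] × ℚ_[p])) (hK₂o : IsOpen (K₂ : Set (ℚ_[p] × ℚ_[p])))
    (hK₂c : IsCompact (K₂ : Set (ℚ_[p] × ℚ_[p]))) :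
    FiniteDimensional ℂ (stmt15Space p γ K₁ K₂) :=
  stmt_15_general p γ hγ K₁ hK₁ K₂ hK₂o
end
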